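/- arXiv:2406.04255 — 10 statements merged into one kernel-verified Lean document; each statement's English description precedes it below -/
import Mathlib

section
/- Let z > 0 and c1, c2 ≥ 0 be real numbers, and define σ(r) = √((2/z)·r·(1−r)·(c1·(1−r) + c2·r)) for r ∈ [0,1]. Then for all x, y ∈ [0,1] one has |σ(x) − σ(y)|² ≤ (6·(c1 + c2)/z)·|x − y|. -/
private lemma B1_bound {x y : ℝ} (hx0 : 0 ≤ x) (hx1 : x ≤ 1) (hy0 : 0 ≤ y) (hy1 : y ≤ 1) :
    |1 - 2 * (x + y) + (x ^ 2 + x * y + y ^ 2)| ≤ 3 := by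
  rw [abs_le]
  constructor <;> nlinarith [sq_nonneg (x + y), sq_nonneg (x - y), sq_nonneg (x + y - 2),
    mul_nonneg hx0 hy0]

private lemma B2_bound {x y : ℝ} (hx0 : 0 ≤ x) (hx1 : x ≤ 1) (hy0 : 0 ≤ y) (hy1 : y ≤ 1) :
    |(x + y) - (x ^ 2 + x * y + y ^ 2)| ≤ 3 := by
  rw [abs_le]
  constructor <;> nlinarith [sq_nonneg (x + y), sq_nonneg (x - y), mul_nonneg hx0 hy0]

private lemma sqrt_diff_sq_le {a b : ℝ} (ha : 0 ≤ a) (hb : 0 ≤ b) :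
    (Real.sqrt a - Real.sqrt b) ^ 2 ≤ |a - b| := by
  rcases le_total b a with h | h
  · rw [abs_of_nonneg (by linarith)]
    have hst := Real.sqrt_le_sqrt h
    nlinarith [Real.sq_sqrt ha, Real.sq_sqrt hb, Real.sqrt_nonneg b]
  · rw [abs_of_nonpos (by linarith)]
    have hst := Real.sqrt_le_sqrt h
    nlinarith [Real.sq_sqrt ha, Real.sq_sqrt hb, Real.sqrt_nonneg a]

/-- Hölder-type bound on the diffusion coefficient of the culled frequency process
(used in the pathwise uniqueness proof of Proposition 3.2). -/
theorem sigma_holder_bound (z c1 c2 : ℝ) (hz : 0 < z) (hc1 : 0 ≤ c1) (hc2 : 0 ≤ c2)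
    (σ : ℝ → ℝ)
    (hσ : ∀ r, σ r = Real.sqrt ((2 / z) * r * (1 - r) * (c1 * (1 - r) + c2 * r))) :
    ∀ x ∈ Set.Icc (0 : ℝ) 1, ∀ y ∈ Set.Icc (0 : ℝ) 1,
      |σ x - σ y| ^ 2 ≤ (6 * (c1 + c2) / z) * |x - y| := by
  intro x hx y hy
  obtain ⟨hx0, hx1⟩ := hx
  obtain ⟨hy0, hy1⟩ := hy
  set a := (2 / z) * x * (1 - x) * (c1 * (1 - x) + c2 * x) with ha_def
  set b := (2 / z) * y * (1 - y) * (c1 * (1 - y) + c2 * y) with hb_def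
  have hz2 : (0:ℝ) ≤ 2 / z := by positivity
  have ha : 0 ≤ a := by
    apply mul_nonneg
    · apply mul_nonneg (mul_nonneg hz2 hx0); linarith
    · exact add_nonneg (mul_nonneg hc1 (by linarith)) (mul_nonneg hc2 hx0)
  have hb : 0 ≤ b := by
    apply mul_nonneg
    · apply mul_nonneg (mul_nonneg hz2 hy0); linarith
    · exact add_nonneg (mul_nonneg hc1 (by linarith)) (mul_nonneg hc2 hy0)
  have h1 : (Real.sqrt a - Real.sqrt b) ^ 2 ≤ |a - b| := sqrt_diff_sq_le ha hb
  have hB1 := B1_bound hx0 hx1 hy0 hy1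
  have hB2 := B2_bound hx0 hx1 hy0 hy1
  set B1 : ℝ := 1 - 2 * (x + y) + (x ^ 2 + x * y + y ^ 2)
  set B2 : ℝ := (x + y) - (x ^ 2 + x * y + y ^ 2)
  have hfact : a - b = (2 / z) * ((x - y) * (c1 * B1 + c2 * B2)) := by
    rw [ha_def, hb_def]; ring
  have hQ : |c1 * B1 + c2 * B2| ≤ 3 * (c1 + c2) := by
    calc |c1 * B1 + c2 * B2| ≤ |c1 * B1| + |c2 * B2| := abs_add_le _ _
      _ = c1 * |B1| + c2 * |B2| := by
          rw [abs_mul, abs_mul, abs_of_nonneg hc1, abs_of_nonneg hc2]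
      _ ≤ c1 * 3 + c2 * 3 := by gcongr
      _ = 3 * (c1 + c2) := by ring
  have h2 : |a - b| ≤ (6 * (c1 + c2) / z) * |x - y| := by
    rw [hfact, abs_mul, abs_mul, abs_of_nonneg hz2]
    calc 2 / z * (|x - y| * |c1 * B1 + c2 * B2|)
        ≤ 2 / z * (|x - y| * (3 * (c1 + c2))) := by
          exact mul_le_mul_of_nonneg_left
            (mul_le_mul_of_nonneg_left hQ (abs_nonneg _)) hz2
      _ = (6 * (c1 + c2) / z) * |x - y| := by ring
  rw [hσ x, hσ y]
  calc |Real.sqrt a - Real.sqrt b| ^ 2 = (Real.sqrt a - Real.sqrt b) ^ 2 := sq_abs _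
    _ ≤ |a - b| := h1
    _ ≤ (6 * (c1 + c2) / z) * |x - y| := h2
end

section
/- Let z > 0 and let μ1 be a Borel measure on U2 = [0,∞)² ∖ {(0,0)} with ∫_{U2} w2 μ1(dw) < ∞. For q ∈ ℝ, w ∈ U2 and v ≥ 0 set h1(q, w, v) = −q·(w2/(z + w1 + w2))·1_{\{q ∈ [0,1]\}}·1_{\{v ≤ qz\}}. Then for all x, y ∈ [0,1]: ∫_{U2} ∫_0^∞ |h1(x, w, v) − h1(y, w, v)| dv μ1(dw) ≤ 2·|x − y|·∫_{U2} w2 μ1(dw). -/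
open MeasureTheory

lemma inner_bound_aux (z : ℝ) (hz : 0 < z) (w1 w2 : ℝ) (hw1 : 0 ≤ w1) (hw2 : 0 ≤ w2)
    (x y : ℝ) (hx0 : 0 ≤ x) (hx1 : x ≤ 1) (hy0 : 0 ≤ y) (hy1 : y ≤ 1) (hyx : y ≤ x) :
    ∫⁻ v in Set.Ioi (0 : ℝ), ENNReal.ofReal
        |(-x * (w2 / (z + w1 + w2)) * (if v ≤ x * z then (1:ℝ) else 0)) -
         (-y * (w2 / (z + w1 + w2)) * (if v ≤ y * z then (1:ℝ) else 0))| ≤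
      ENNReal.ofReal (2 * |x - y|) * ENNReal.ofReal w2 := by
  set c : ℝ := w2 / (z + w1 + w2) with hc_def
  have hD : 0 < z + w1 + w2 := by linarith
  have hc : 0 ≤ c := div_nonneg hw2 hD.le
  have hcz : c * z ≤ w2 := by
    rw [hc_def, div_mul_eq_mul_div, div_le_iff₀ hD]
    nlinarith
  set g : ℝ → ENNReal := fun v =>
      (Set.Ioc (0:ℝ) (x*z)).indicator (fun _ => ENNReal.ofReal (c*(x-y))) v +
      (Set.Ioc (y*z) (x*z)).indicator (fun _ => ENNReal.ofReal (c*y)) v with hg_def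
  have hyxz : y * z ≤ x * z := by nlinarith
  have hpt : ∀ v ∈ Set.Ioi (0:ℝ), ENNReal.ofReal
      |(-x * c * (if v ≤ x * z then (1:ℝ) else 0)) -
       (-y * c * (if v ≤ y * z then (1:ℝ) else 0))| ≤ g v := by
    intro v hv
    simp only [Set.mem_Ioi] at hv
    by_cases h1 : v ≤ y * z
    · have h2 : v ≤ x * z := h1.trans hyxz
      rw [if_pos h1, if_pos h2]
      have : |(-x * c * 1) - (-y * c * 1)| = c * (x - y) := by
        rw [mul_one, mul_one]
        rw [abs_of_nonpos (by nlinarith)]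
        ring
      rw [this, hg_def]
      simp only
      rw [Set.indicator_of_mem (by constructor <;> [exact hv; exact h2])]
      exact le_self_add
    · by_cases h2 : v ≤ x * z
      · rw [if_neg h1, if_pos h2]
        have : |(-x * c * 1) - (-y * c * 0)| = c * (x - y) + c * y := by
          rw [mul_one, mul_zero, sub_zero, abs_of_nonpos (by nlinarith)]
          ring
        rw [this, hg_def]
        simp only
        rw [Set.indicator_of_mem (by constructor <;> [exact hv; exact h2]),
          Set.indicator_of_mem (by constructor <;> [exact lt_of_not_ge h1; exact h2]),
          ← ENNReal.ofReal_add (by nlinarith) (by nlinarith)]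
      · rw [if_neg h1, if_neg h2]
        simp
  calc ∫⁻ v in Set.Ioi (0 : ℝ), ENNReal.ofReal
        |(-x * c * (if v ≤ x * z then (1:ℝ) else 0)) -
         (-y * c * (if v ≤ y * z then (1:ℝ) else 0))|
      ≤ ∫⁻ v in Set.Ioi (0:ℝ), g v := by
        refine lintegral_mono_ae ?_
        exact (ae_restrict_iff' measurableSet_Ioi).2 (Filter.Eventually.of_forall hpt)
    _ ≤ ENNReal.ofReal (2 * |x - y|) * ENNReal.ofReal w2 := by
        rw [hg_def]
        rw [lintegral_add_left ((measurable_const.indicator measurableSet_Ioc))]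
        simp only [lintegral_indicator measurableSet_Ioc, setLIntegral_const]
        have m1 : (volume.restrict (Set.Ioi (0:ℝ))) (Set.Ioc 0 (x*z)) ≤ ENNReal.ofReal (x*z) := by
          calc (volume.restrict (Set.Ioi (0:ℝ))) (Set.Ioc 0 (x*z)) ≤ volume (Set.Ioc (0:ℝ) (x*z)) :=
                Measure.restrict_le_self _
            _ = ENNReal.ofReal (x*z - 0) := Real.volume_Ioc
            _ = ENNReal.ofReal (x*z) := by rw [sub_zero]
        have m2 : (volume.restrict (Set.Ioi (0:ℝ))) (Set.Ioc (y*z) (x*z)) ≤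
            ENNReal.ofReal (x*z - y*z) := by
          calc (volume.restrict (Set.Ioi (0:ℝ))) (Set.Ioc (y*z) (x*z)) ≤
              volume (Set.Ioc (y*z) (x*z)) := Measure.restrict_le_self _
            _ = ENNReal.ofReal (x*z - y*z) := Real.volume_Ioc
        calc ENNReal.ofReal (c*(x-y)) * (volume.restrict (Set.Ioi (0:ℝ))) (Set.Ioc 0 (x*z)) +
              ENNReal.ofReal (c*y) * (volume.restrict (Set.Ioi (0:ℝ))) (Set.Ioc (y*z) (x*z))
            ≤ ENNReal.ofReal (c*(x-y)) * ENNReal.ofReal (x*z) +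
              ENNReal.ofReal (c*y) * ENNReal.ofReal (x*z - y*z) := by
              gcongr
          _ = ENNReal.ofReal (c*(x-y)*(x*z) + c*y*(x*z - y*z)) := by
              have e1 : (0:ℝ) ≤ c*(x-y) := mul_nonneg hc (by linarith)
              have e2 : (0:ℝ) ≤ c*y := mul_nonneg hc hy0
              rw [← ENNReal.ofReal_mul e1, ← ENNReal.ofReal_mul e2,
                ← ENNReal.ofReal_add (mul_nonneg e1 (by nlinarith)) (mul_nonneg e2 (by nlinarith))]
          _ ≤ ENNReal.ofReal (2 * |x - y|) * ENNReal.ofReal w2 := by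
              rw [← ENNReal.ofReal_mul (by positivity)]
              apply ENNReal.ofReal_le_ofReal
              rw [abs_of_nonneg (by linarith)]
              have k1 : c*z*((x-y)*(x+y)) ≤ w2*((x-y)*(x+y)) :=
                mul_le_mul_of_nonneg_right hcz
                  (mul_nonneg (by linarith) (by linarith))
              have k2 : w2*(x-y)*(x+y) ≤ w2*(x-y)*2 :=
                mul_le_mul_of_nonneg_left (by linarith) (mul_nonneg hw2 (by linarith))
              nlinarith [k1, k2]

/-- Integrated Lipschitz bound on the jump coefficient `h1`
(pathwise uniqueness proof of Proposition 3.2). -/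
theorem h1_integrated_bound (z : ℝ) (hz : 0 < z) (μ1 : Measure (ℝ × ℝ))
    (hμ1supp : μ1 ({w : ℝ × ℝ | 0 ≤ w.1 ∧ 0 ≤ w.2 ∧ w ≠ (0, 0)}ᶜ) = 0)
    (hμ1int : ∫⁻ w, ENNReal.ofReal w.2 ∂μ1 < ⊤)
    (h1 : ℝ → ℝ × ℝ → ℝ → ℝ)
    (hh1 : ∀ q w v, h1 q w v = -q * (w.2 / (z + w.1 + w.2)) *
      (if q ∈ Set.Icc (0 : ℝ) 1 then (1 : ℝ) else 0) *
      (if v ≤ q * z then (1 : ℝ) else 0)) :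
    ∀ x ∈ Set.Icc (0 : ℝ) 1, ∀ y ∈ Set.Icc (0 : ℝ) 1,
      ∫⁻ w, (∫⁻ v in Set.Ioi (0 : ℝ), ENNReal.ofReal |h1 x w v - h1 y w v|) ∂μ1 ≤
        ENNReal.ofReal (2 * |x - y|) * ∫⁻ w, ENNReal.ofReal w.2 ∂μ1 := by
  intro x hx y hy
  have hae : ∀ᵐ w ∂μ1, 0 ≤ w.1 ∧ 0 ≤ w.2 := by
    have hnull : μ1 ({w : ℝ × ℝ | 0 ≤ w.1 ∧ 0 ≤ w.2}ᶜ) = 0 := by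
      refine measure_mono_null ?_ hμ1supp
      intro w hw
      simp only [Set.mem_compl_iff, Set.mem_setOf_eq] at *
      tauto
    rw [MeasureTheory.ae_iff]
    refine measure_mono_null ?_ hnull
    intro w hw
    simpa using hw
  have key : ∀ᵐ w ∂μ1,
      (∫⁻ v in Set.Ioi (0 : ℝ), ENNReal.ofReal |h1 x w v - h1 y w v|) ≤
        ENNReal.ofReal (2 * |x - y|) * ENNReal.ofReal w.2 := by
    filter_upwards [hae] with w hw
    have hrw : ∀ q, q ∈ Set.Icc (0:ℝ) 1 → ∀ v, h1 q w v =
        -q * (w.2 / (z + w.1 + w.2)) * (if v ≤ q * z then (1:ℝ) else 0) := by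
      intro q hq v
      rw [hh1, if_pos hq, mul_one]
    rcases le_total y x with hyx | hxy
    · calc ∫⁻ v in Set.Ioi (0 : ℝ), ENNReal.ofReal |h1 x w v - h1 y w v|
          = ∫⁻ v in Set.Ioi (0 : ℝ), ENNReal.ofReal
            |(-x * (w.2 / (z + w.1 + w.2)) * (if v ≤ x * z then (1:ℝ) else 0)) -
             (-y * (w.2 / (z + w.1 + w.2)) * (if v ≤ y * z then (1:ℝ) else 0))| := by
            apply lintegral_congr; intro v; rw [hrw x hx, hrw y hy]
        _ ≤ _ := inner_bound_aux z hz w.1 w.2 hw.1 hw.2 x y hx.1 hx.2 hy.1 hy.2 hyx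
    · calc ∫⁻ v in Set.Ioi (0 : ℝ), ENNReal.ofReal |h1 x w v - h1 y w v|
          = ∫⁻ v in Set.Ioi (0 : ℝ), ENNReal.ofReal
            |(-y * (w.2 / (z + w.1 + w.2)) * (if v ≤ y * z then (1:ℝ) else 0)) -
             (-x * (w.2 / (z + w.1 + w.2)) * (if v ≤ x * z then (1:ℝ) else 0))| := by
            apply lintegral_congr; intro v
            rw [abs_sub_comm, hrw x hx, hrw y hy]
        _ ≤ ENNReal.ofReal (2 * |y - x|) * ENNReal.ofReal w.2 :=
            inner_bound_aux z hz w.1 w.2 hw.1 hw.2 y x hy.1 hy.2 hx.1 hx.2 hxy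
        _ = ENNReal.ofReal (2 * |x - y|) * ENNReal.ofReal w.2 := by rw [abs_sub_comm]
  calc ∫⁻ w, (∫⁻ v in Set.Ioi (0 : ℝ), ENNReal.ofReal |h1 x w v - h1 y w v|) ∂μ1
      ≤ ∫⁻ w, ENNReal.ofReal (2 * |x - y|) * ENNReal.ofReal w.2 ∂μ1 := lintegral_mono_ae key
    _ = ENNReal.ofReal (2 * |x - y|) * ∫⁻ w, ENNReal.ofReal w.2 ∂μ1 :=
        lintegral_const_mul' _ _ ENNReal.ofReal_ne_top
end

section
/- Let z > 0 and let μ1 be a Borel measure on U2 = [0,∞)² ∖ {(0,0)} with ∫_{U2} (w1/(z + w1 + w2))² μ1(dw) < ∞. For q ∈ ℝ, w ∈ U2 and v ≥ 0 set g1(q, w, v) = (1−q)·(w1/(z + w1 + w2))·1_{\{q ∈ [0,1]\}}·1_{\{v ≤ qz\}}. Then for all x, y ∈ [0,1]: ∫_{U2} ∫_0^∞ |g1(x, w, v) − g1(y, w, v)|² dv μ1(dw) ≤ 2·z·|x − y|·∫_{U2} (w1/(z + w1 + w2))² μ1(dw). -/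
open MeasureTheory

lemma inner_bound (z c x y : ℝ) (hz : 0 < z) (hx : 0 ≤ x) (hxy : x ≤ y) (hy : y ≤ 1) :
    ∫⁻ v in Set.Ioi (0 : ℝ), ENNReal.ofReal
      (|(1 - x) * c * (if v ≤ x * z then (1:ℝ) else 0)
        - (1 - y) * c * (if v ≤ y * z then (1:ℝ) else 0)| ^ 2)
      ≤ ENNReal.ofReal (2 * z * (y - x)) * ENNReal.ofReal (c ^ 2) := by
  have hc2 : (0:ℝ) ≤ c ^ 2 := sq_nonneg c
  have hyx : (0:ℝ) ≤ y - x := sub_nonneg.2 hxy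
  set B : ℝ → ENNReal := fun v =>
    (Set.Ioc (0:ℝ) (x*z)).indicator (fun _ => ENNReal.ofReal (c^2 * (y-x))) v +
    (Set.Ioc (x*z) (y*z)).indicator (fun _ => ENNReal.ofReal (c^2)) v with hB
  have step1 : ∫⁻ v in Set.Ioi (0 : ℝ), ENNReal.ofReal
      (|(1 - x) * c * (if v ≤ x * z then (1:ℝ) else 0)
        - (1 - y) * c * (if v ≤ y * z then (1:ℝ) else 0)| ^ 2)
      ≤ ∫⁻ v in Set.Ioi (0 : ℝ), B v := by
    apply setLIntegral_mono' measurableSet_Ioi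
    intro v hv
    simp only [Set.mem_Ioi] at hv
    by_cases h1 : v ≤ x * z
    · have h2 : v ≤ y * z := h1.trans (by nlinarith)
      simp only [hB, if_pos h1, if_pos h2, mul_one]
      have hmem : v ∈ Set.Ioc (0:ℝ) (x*z) := ⟨hv, h1⟩
      rw [Set.indicator_of_mem hmem]
      refine le_trans ?_ le_self_add
      apply ENNReal.ofReal_le_ofReal
      have : (1 - x) * c - (1 - y) * c = c * (y - x) := by ring
      rw [this]
      have h1 : |c * (y-x)|^2 = c^2 * (y-x)^2 := by
        rw [sq_abs]; ring
      rw [h1]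
      nlinarith [mul_nonneg (mul_nonneg hc2 hyx) (show (0:ℝ) ≤ 1 - (y - x) by linarith)]
    · by_cases h2 : v ≤ y * z
      · simp only [hB, if_neg h1, if_pos h2, mul_one, mul_zero, zero_sub, abs_neg]
        have hmem : v ∈ Set.Ioc (x*z) (y*z) := ⟨lt_of_not_ge h1, h2⟩
        rw [Set.indicator_of_notMem (by simp [Set.mem_Ioc, h1]), Set.indicator_of_mem hmem]
        rw [zero_add]
        apply ENNReal.ofReal_le_ofReal
        rw [sq_abs]
        nlinarith [mul_nonneg (mul_nonneg hc2 (le_trans hx hxy)) (show (0:ℝ) ≤ 2 - y by linarith)]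
      · simp only [if_neg h1, if_neg h2, mul_zero, sub_zero, abs_zero]
        simp
  refine step1.trans ?_
  have step2 : ∫⁻ v in Set.Ioi (0 : ℝ), B v ≤ ∫⁻ v, B v := setLIntegral_le_lintegral _ _
  refine step2.trans ?_
  have hmeas1 : Measurable ((Set.Ioc (0:ℝ) (x*z)).indicator
      (fun _ => ENNReal.ofReal (c^2 * (y-x)))) :=
    measurable_const.indicator measurableSet_Ioc
  rw [hB]
  rw [lintegral_add_left hmeas1]
  rw [lintegral_indicator measurableSet_Ioc, lintegral_indicator measurableSet_Ioc]
  simp only [lintegral_const, Measure.restrict_apply, Set.univ_inter, MeasurableSet.univ]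
  rw [Real.volume_Ioc, Real.volume_Ioc]
  rw [← ENNReal.ofReal_mul (mul_nonneg hc2 hyx), ← ENNReal.ofReal_mul hc2,
    ← ENNReal.ofReal_add (by nlinarith [mul_nonneg (mul_nonneg hc2 hyx) (mul_nonneg hx hz.le)])
      (by nlinarith [mul_nonneg (mul_nonneg hc2 hyx) hz.le]),
    ← ENNReal.ofReal_mul (by positivity)]
  apply ENNReal.ofReal_le_ofReal
  nlinarith [mul_nonneg (mul_nonneg hc2 hyx)
    (mul_nonneg hz.le (show (0:ℝ) ≤ 1 - x by linarith))]

lemma key (z : ℝ) (hz : 0 < z) (μ1 : Measure (ℝ × ℝ)) (x y : ℝ)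
    (hx : 0 ≤ x) (hxy : x ≤ y) (hy : y ≤ 1) :
    ∫⁻ w, (∫⁻ v in Set.Ioi (0 : ℝ), ENNReal.ofReal
      (|(1 - x) * (w.1 / (z + w.1 + w.2)) * (if v ≤ x * z then (1:ℝ) else 0)
        - (1 - y) * (w.1 / (z + w.1 + w.2)) * (if v ≤ y * z then (1:ℝ) else 0)| ^ 2)) ∂μ1
      ≤ ENNReal.ofReal (2 * z * (y - x)) *
        ∫⁻ w, ENNReal.ofReal ((w.1 / (z + w.1 + w.2)) ^ 2) ∂μ1 := by
  rw [← lintegral_const_mul' _ _ ENNReal.ofReal_ne_top]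
  exact lintegral_mono fun w => inner_bound z _ x y hz hx hxy hy

/-- Square-integral estimate on the jump coefficient `g1`
(pathwise uniqueness proof of Proposition 3.2). -/
theorem g1_square_integrated_bound (z : ℝ) (hz : 0 < z) (μ1 : Measure (ℝ × ℝ))
    (hμ1supp : μ1 ({w : ℝ × ℝ | 0 ≤ w.1 ∧ 0 ≤ w.2 ∧ w ≠ (0, 0)}ᶜ) = 0)
    (hμ1int : ∫⁻ w, ENNReal.ofReal ((w.1 / (z + w.1 + w.2)) ^ 2) ∂μ1 < ⊤)
    (g1 : ℝ → ℝ × ℝ → ℝ → ℝ)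
    (hg1 : ∀ q w v, g1 q w v = (1 - q) * (w.1 / (z + w.1 + w.2)) *
      (if q ∈ Set.Icc (0 : ℝ) 1 then (1 : ℝ) else 0) *
      (if v ≤ q * z then (1 : ℝ) else 0)) :
    ∀ x ∈ Set.Icc (0 : ℝ) 1, ∀ y ∈ Set.Icc (0 : ℝ) 1,
      ∫⁻ w, (∫⁻ v in Set.Ioi (0 : ℝ), ENNReal.ofReal (|g1 x w v - g1 y w v| ^ 2)) ∂μ1 ≤
        ENNReal.ofReal (2 * z * |x - y|) *
          ∫⁻ w, ENNReal.ofReal ((w.1 / (z + w.1 + w.2)) ^ 2) ∂μ1 := by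
  intro x hxm y hym
  obtain ⟨hx0, hx1⟩ := hxm
  obtain ⟨hy0, hy1⟩ := hym
  rcases le_total x y with hxy | hyx
  · have habs : |x - y| = y - x := by rw [abs_sub_comm]; exact abs_of_nonneg (sub_nonneg.2 hxy)
    rw [habs]
    simp_rw [hg1, if_pos (Set.mem_Icc.2 ⟨hx0, hx1⟩), if_pos (Set.mem_Icc.2 ⟨hy0, hy1⟩), mul_one]
    exact key z hz μ1 x y hx0 hxy hy1
  · have habs : |x - y| = x - y := abs_of_nonneg (sub_nonneg.2 hyx)
    rw [habs]
    simp_rw [fun w v => abs_sub_comm (g1 x w v) (g1 y w v)]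
    simp_rw [hg1, if_pos (Set.mem_Icc.2 ⟨hx0, hx1⟩), if_pos (Set.mem_Icc.2 ⟨hy0, hy1⟩), mul_one]
    exact key z hz μ1 y x hy0 hyx hx1
end

section
/- Fix z > 0, w1, w2 ≥ 0 with (w1, w2) ≠ (0,0), and v ≥ 0. Then the map x ↦ x·(1 − (w2/(z + w1 + w2))·1_{\{v ≤ (1 − x)z\}}) is non-decreasing on [0,1]. -/
/-- The post-jump position `x ↦ x + h2(x, w, v)` of the culled frequency process is
non-decreasing in the pre-jump position (Proposition 3.2). -/
theorem post_jump_h2_monotone (z w1 w2 v : ℝ) (hz : 0 < z) (hw1 : 0 ≤ w1) (hw2 : 0 ≤ w2)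
    (hw : (w1, w2) ≠ (0, 0)) (hv : 0 ≤ v) :
    MonotoneOn (fun x : ℝ =>
      x * (1 - (w2 / (z + w1 + w2)) * (if v ≤ (1 - x) * z then (1 : ℝ) else 0)))
      (Set.Icc (0 : ℝ) 1) := by
  intro x hx y hy hxy
  have hd : 0 < z + w1 + w2 := by linarith
  have hc0 : 0 ≤ w2 / (z + w1 + w2) := div_nonneg hw2 hd.le
  have hc1 : w2 / (z + w1 + w2) ≤ 1 := by
    rw [div_le_one hd]; linarith
  simp only
  split_ifs with h1 h2 h2
  · nlinarith [mul_nonneg (sub_nonneg.2 hxy) (sub_nonneg.2 hc1)]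
  · nlinarith [mul_nonneg hx.1 hc0]
  · exfalso; nlinarith
  · linarith
end

section
/- Let f : ℝ → ℝ be twice differentiable on [0,1] with |f'(x)| ≤ M1 and |f''(x)| ≤ M2 for all x ∈ [0,1]. Then for every r ∈ [0,1] and every u1, u2 ≥ 0 with u1 + u2 < 1: | f(r + u1·(1 − r) − u2·r) − f(r) − ((1 − r)·u1/(1 − u1 − u2))·f'(r) | ≤ (u1² + u2²)·M2 + ((u1² + u1·u2)/(1 − u1 − u2))·M1 + u2·M1. -/
/-- Second generator estimate in the proof of Proposition 3.3: bound on the compensated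
`μ1`-jump term of the generator of the culled frequency process. -/
theorem compensated_jump_bound_mu1 (f f' f'' : ℝ → ℝ) (M1 M2 : ℝ)
    (hf : ∀ x ∈ Set.Icc (0 : ℝ) 1, HasDerivWithinAt f (f' x) (Set.Icc (0 : ℝ) 1) x)
    (hf' : ∀ x ∈ Set.Icc (0 : ℝ) 1, HasDerivWithinAt f' (f'' x) (Set.Icc (0 : ℝ) 1) x)
    (hbd1 : ∀ x ∈ Set.Icc (0 : ℝ) 1, |f' x| ≤ M1)
    (hbd2 : ∀ x ∈ Set.Icc (0 : ℝ) 1, |f'' x| ≤ M2) :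
    ∀ r ∈ Set.Icc (0 : ℝ) 1, ∀ u1 u2 : ℝ, 0 ≤ u1 → 0 ≤ u2 → u1 + u2 < 1 →
      |f (r + u1 * (1 - r) - u2 * r) - f r - ((1 - r) * u1 / (1 - u1 - u2)) * f' r| ≤
        (u1 ^ 2 + u2 ^ 2) * M2 + ((u1 ^ 2 + u1 * u2) / (1 - u1 - u2)) * M1 + u2 * M1 := by
  intro r hr u1 u2 hu1 hu2 h12
  obtain ⟨hr0, hr1⟩ := hr
  set y := r + u1 * (1 - r) - u2 * r with hy
  have hd : (0:ℝ) < 1 - u1 - u2 := by linarith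
  have hy0 : 0 ≤ y := by nlinarith
  have hy1 : y ≤ 1 := by nlinarith
  have hyI : y ∈ Set.Icc (0:ℝ) 1 := ⟨hy0, hy1⟩
  have hrI : r ∈ Set.Icc (0:ℝ) 1 := ⟨hr0, hr1⟩
  have hM1 : 0 ≤ M1 := le_trans (abs_nonneg _) (hbd1 0 (by norm_num))
  have hM2 : 0 ≤ M2 := le_trans (abs_nonneg _) (hbd2 0 (by norm_num))
  -- f' is M2-Lipschitz on [0,1]
  have hLip : ∀ t ∈ Set.Icc (0:ℝ) 1, |f' t - f' r| ≤ M2 * |t - r| := by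
    intro t ht
    have := (convex_Icc (0:ℝ) 1).norm_image_sub_le_of_norm_hasDerivWithin_le hf'
      (fun x hx => by rw [Real.norm_eq_abs]; exact hbd2 x hx) hrI ht
    simpa [Real.norm_eq_abs] using this
  -- segment between r and y
  have hsub : Set.uIcc r y ⊆ Set.Icc (0:ℝ) 1 := by
    intro t ht
    rw [Set.mem_uIcc] at ht
    rcases ht with ⟨a, b⟩ | ⟨a, b⟩ <;> exact ⟨by linarith, by linarith⟩
  have habs : ∀ t ∈ Set.uIcc r y, |t - r| ≤ |y - r| := by
    intro t ht
    rw [Set.mem_uIcc] at ht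
    rcases ht with ⟨a, b⟩ | ⟨a, b⟩
    · rw [abs_of_nonneg (by linarith), abs_of_nonneg (by linarith)]; linarith
    · rw [abs_of_nonpos (by linarith), abs_of_nonpos (by linarith)]; linarith
  -- Taylor-type bound
  have key1 : |f y - f r - (y - r) * f' r| ≤ M2 * |y - r| * |y - r| := by
    have hg : ∀ t ∈ Set.uIcc r y,
        HasDerivWithinAt (fun x => f x - x * f' r) (f' t - f' r) (Set.uIcc r y) t := by
      intro t ht
      have h1 := (hf t (hsub ht)).mono hsub
      have h2 : HasDerivWithinAt (fun x : ℝ => x * f' r) (1 * f' r) (Set.uIcc r y) t :=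
        (hasDerivWithinAt_id t _).mul_const (f' r)
      rw [one_mul] at h2; exact h1.sub h2
    have hbound : ∀ t ∈ Set.uIcc r y, ‖f' t - f' r‖ ≤ M2 * |y - r| := by
      intro t ht
      rw [Real.norm_eq_abs]
      exact le_trans (hLip t (hsub ht))
        (mul_le_mul_of_nonneg_left (habs t ht) hM2)
    have := (convex_uIcc r y).norm_image_sub_le_of_norm_hasDerivWithin_le hg hbound
      Set.left_mem_uIcc Set.right_mem_uIcc
    rw [Real.norm_eq_abs, Real.norm_eq_abs] at this
    calc |f y - f r - (y - r) * f' r|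
        = |(f y - y * f' r) - (f r - r * f' r)| := by ring_nf
      _ ≤ M2 * |y - r| * |y - r| := this
  set c := (1 - r) * u1 / (1 - u1 - u2) with hc
  set B := (u1 ^ 2 + u1 * u2) / (1 - u1 - u2) with hB
  have hcd : c * (1 - u1 - u2) = (1 - r) * u1 := div_mul_cancel₀ _ hd.ne'
  have hBd : B * (1 - u1 - u2) = u1 ^ 2 + u1 * u2 := div_mul_cancel₀ _ hd.ne'
  have he : (y - r - c) * (1 - u1 - u2)
      = -(u1 * (1 - r) * (u1 + u2)) - u2 * r * (1 - u1 - u2) := by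
    linear_combination (1 - u1 - u2) * hy - hcd
  have key2 : |(y - r) - c| ≤ B + u2 := by
    rw [abs_le]
    constructor
    · rw [← mul_le_mul_iff_of_pos_right hd]
      nlinarith [he, hBd, mul_nonneg (mul_nonneg hu1 (by linarith : (0:ℝ) ≤ u1 + u2)) hr0,
        mul_nonneg hu2 (mul_nonneg (by linarith : (0:ℝ) ≤ 1 - r) hd.le)]
    · rw [← mul_le_mul_iff_of_pos_right hd]
      nlinarith [he, hBd, mul_nonneg (mul_nonneg hu1 (by linarith : (0:ℝ) ≤ 1 - r)) (by linarith : (0:ℝ) ≤ u1 + u2),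
        mul_nonneg hu2 (mul_nonneg hr0 hd.le), mul_nonneg hu1 (by linarith : (0:ℝ) ≤ u1 + u2),
        mul_nonneg hu2 hd.le]
  have hsq : M2 * |y - r| * |y - r| ≤ (u1 ^ 2 + u2 ^ 2) * M2 := by
    have h : |y - r| * |y - r| ≤ u1 ^ 2 + u2 ^ 2 := by
      rw [abs_mul_abs_self]
      nlinarith [hy, mul_nonneg (mul_nonneg hu1 hu2) (mul_nonneg hr0 (by linarith : (0:ℝ) ≤ 1 - r)),
        mul_nonneg (mul_nonneg hu1 hu1) (mul_nonneg hr0 (by linarith : (0:ℝ) ≤ 2 - r)),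
        mul_nonneg (mul_nonneg hu2 hu2) (mul_nonneg (by linarith : (0:ℝ) ≤ 1 - r) (by linarith : (0:ℝ) ≤ 1 + r))]
    calc M2 * |y - r| * |y - r| = M2 * (|y - r| * |y - r|) := by ring
      _ ≤ M2 * (u1 ^ 2 + u2 ^ 2) := mul_le_mul_of_nonneg_left h hM2
      _ = (u1 ^ 2 + u2 ^ 2) * M2 := by ring
  have hfr : |f' r| ≤ M1 := hbd1 r hrI
  calc |f y - f r - c * f' r|
      = |(f y - f r - (y - r) * f' r) + ((y - r) - c) * f' r| := by ring_nf
    _ ≤ |f y - f r - (y - r) * f' r| + |((y - r) - c) * f' r| := abs_add_le _ _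
    _ ≤ M2 * |y - r| * |y - r| + |(y - r) - c| * |f' r| := by
        rw [abs_mul]; exact add_le_add key1 le_rfl
    _ ≤ (u1 ^ 2 + u2 ^ 2) * M2 + (B + u2) * M1 := by
        refine add_le_add hsq ?_
        exact mul_le_mul key2 hfr (abs_nonneg _) (by positivity)
    _ = (u1 ^ 2 + u2 ^ 2) * M2 + B * M1 + u2 * M1 := by ring
end

section
/- Let f : ℝ → ℝ be twice differentiable on [0,1] with |f'(x)| ≤ M1 and |f''(x)| ≤ M2 for all x ∈ [0,1]. Then for every r ∈ [0,1] and every u1, u2 ≥ 0 with u1 + u2 < 1: | f(r + u1·(1 − r) − u2·r) − f(r) + (r·u2/(1 − u1 − u2))·f'(r) | ≤ (u1² + u2²)·M2 + ((u1·u2 + u2²)/(1 − u1 − u2))·M1 + u1·M1. -/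
/-- Third generator estimate in the proof of Proposition 3.3: bound on the compensated
`μ2`-jump term of the generator of the culled frequency process. -/
theorem compensated_jump_bound_mu2 (f f' f'' : ℝ → ℝ) (M1 M2 : ℝ)
    (hf : ∀ x ∈ Set.Icc (0 : ℝ) 1, HasDerivWithinAt f (f' x) (Set.Icc (0 : ℝ) 1) x)
    (hf' : ∀ x ∈ Set.Icc (0 : ℝ) 1, HasDerivWithinAt f' (f'' x) (Set.Icc (0 : ℝ) 1) x)
    (hbd1 : ∀ x ∈ Set.Icc (0 : ℝ) 1, |f' x| ≤ M1)
    (hbd2 : ∀ x ∈ Set.Icc (0 : ℝ) 1, |f'' x| ≤ M2) :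
    ∀ r ∈ Set.Icc (0 : ℝ) 1, ∀ u1 u2 : ℝ, 0 ≤ u1 → 0 ≤ u2 → u1 + u2 < 1 →
      |f (r + u1 * (1 - r) - u2 * r) - f r + (r * u2 / (1 - u1 - u2)) * f' r| ≤
        (u1 ^ 2 + u2 ^ 2) * M2 + ((u1 * u2 + u2 ^ 2) / (1 - u1 - u2)) * M1 + u1 * M1 := by
  have hM1 : 0 ≤ M1 := le_trans (abs_nonneg _) (hbd1 0 (by norm_num))
  have hM2 : 0 ≤ M2 := le_trans (abs_nonneg _) (hbd2 0 (by norm_num))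
  -- mean value inequality for f'
  have mvt : ∀ a ∈ Set.Icc (0:ℝ) 1, ∀ b ∈ Set.Icc (0:ℝ) 1, |f' b - f' a| ≤ M2 * |b - a| := by
    intro a ha b hb
    have := (convex_Icc (0:ℝ) 1).norm_image_sub_le_of_norm_hasDerivWithin_le hf'
      (fun z hz => by simpa [Real.norm_eq_abs] using hbd2 z hz) ha hb
    simpa [Real.norm_eq_abs] using this
  -- first order Taylor bound
  have taylor : ∀ x ∈ Set.Icc (0:ℝ) 1, ∀ y ∈ Set.Icc (0:ℝ) 1,
      |f y - f x - f' x * (y - x)| ≤ M2 * (y - x) ^ 2 := by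
    intro x hx y hy
    set s := Set.Icc (min x y) (max x y) with hs
    have hsub : s ⊆ Set.Icc (0:ℝ) 1 :=
      Set.Icc_subset_Icc (le_min hx.1 hy.1) (max_le hx.2 hy.2)
    have hxs : x ∈ s := ⟨min_le_left _ _, le_max_left _ _⟩
    have hys : y ∈ s := ⟨min_le_right _ _, le_max_right _ _⟩
    have hg : ∀ z ∈ s, HasDerivWithinAt (fun z => f z - f' x * z) (f' z - f' x) s z := by
      intro z hz
      have h1 := (hf z (hsub hz)).mono hsub
      have h2 : HasDerivWithinAt (fun z => f' x * z) (f' x) s z := by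
        simpa using (hasDerivWithinAt_id z s).const_mul (f' x)
      exact h1.sub h2
    have bound : ∀ z ∈ s, ‖f' z - f' x‖ ≤ M2 * |y - x| := by
      intro z hz
      have h1 := mvt x hx z (hsub hz)
      have h2 : |z - x| ≤ |y - x| := by
        rw [abs_le]
        constructor
        · have := abs_nonneg (y - x)
          have h3 : min x y ≤ z := hz.1
          have h4 : x ≤ max x y := hxs.2
          have : max x y - min x y = |y - x| := by
            rcases le_total x y with h | h
            · rw [max_eq_right h, min_eq_left h, abs_of_nonneg (by linarith)]
            · rw [max_eq_left h, min_eq_right h, abs_of_nonpos (by linarith)]; ring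
          linarith
        · have h3 : z ≤ max x y := hz.2
          have h4 : min x y ≤ x := hxs.1
          have : max x y - min x y = |y - x| := by
            rcases le_total x y with h | h
            · rw [max_eq_right h, min_eq_left h, abs_of_nonneg (by linarith)]
            · rw [max_eq_left h, min_eq_right h, abs_of_nonpos (by linarith)]; ring
          linarith
      calc ‖f' z - f' x‖ = |f' z - f' x| := Real.norm_eq_abs _
        _ ≤ M2 * |z - x| := h1
        _ ≤ M2 * |y - x| := by nlinarith
    have key := (convex_Icc (min x y) (max x y)).norm_image_sub_le_of_norm_hasDerivWithin_le
      hg bound hxs hys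
    have : |f y - f' x * y - (f x - f' x * x)| ≤ M2 * |y - x| * |y - x| := by
      simpa [Real.norm_eq_abs] using key
    calc |f y - f x - f' x * (y - x)| = |f y - f' x * y - (f x - f' x * x)| := by ring_nf
      _ ≤ M2 * |y - x| * |y - x| := this
      _ = M2 * (y - x) ^ 2 := by rw [mul_assoc, ← abs_mul, abs_mul_self]; ring
  intro r hr u1 u2 hu1 hu2 hlt
  have hd : 0 < 1 - u1 - u2 := by linarith
  obtain ⟨hr0, hr1⟩ := hr
  set y := r + u1 * (1 - r) - u2 * r with hy
  have hy01 : y ∈ Set.Icc (0:ℝ) 1 := by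
    constructor
    · nlinarith
    · nlinarith
  have hT := taylor r ⟨hr0, hr1⟩ y hy01
  have hfr := hbd1 r ⟨hr0, hr1⟩
  -- split the expression
  have key : f y - f r + (r * u2 / (1 - u1 - u2)) * f' r =
      (f y - f r - f' r * (y - r)) + f' r * ((y - r) + r * u2 / (1 - u1 - u2)) := by
    ring
  have hδ : y - r = u1 * (1 - r) - u2 * r := by rw [hy]; ring
  have hc : (y - r) + r * u2 / (1 - u1 - u2) =
      u1 * (1 - r) + r * u2 * (u1 + u2) / (1 - u1 - u2) := by
    rw [hδ]
    field_simp
    ring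
  have hcnn : 0 ≤ u1 * (1 - r) + r * u2 * (u1 + u2) / (1 - u1 - u2) := by
    have : 0 ≤ r * u2 * (u1 + u2) / (1 - u1 - u2) := by positivity
    nlinarith
  have h2 : |f' r * ((y - r) + r * u2 / (1 - u1 - u2))| ≤
      ((u1 * u2 + u2 ^ 2) / (1 - u1 - u2)) * M1 + u1 * M1 := by
    rw [abs_mul, hc, abs_of_nonneg hcnn]
    have hb1 : r * u2 * (u1 + u2) / (1 - u1 - u2) ≤ (u1 * u2 + u2 ^ 2) / (1 - u1 - u2) := by
      gcongr
      nlinarith [mul_nonneg (mul_nonneg hu2 (by linarith : (0:ℝ) ≤ u1 + u2))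
        (by linarith : (0:ℝ) ≤ 1 - r)]
    have hb2 : u1 * (1 - r) ≤ u1 := by nlinarith
    have hfnn : 0 ≤ u1 * (1 - r) + r * u2 * (u1 + u2) / (1 - u1 - u2) := hcnn
    calc |f' r| * (u1 * (1 - r) + r * u2 * (u1 + u2) / (1 - u1 - u2))
        ≤ M1 * (u1 * (1 - r) + r * u2 * (u1 + u2) / (1 - u1 - u2)) := by
          apply mul_le_mul_of_nonneg_right hfr hfnn
      _ ≤ M1 * ((u1 * u2 + u2 ^ 2) / (1 - u1 - u2) + u1) := by nlinarith
      _ = ((u1 * u2 + u2 ^ 2) / (1 - u1 - u2)) * M1 + u1 * M1 := by ring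
  have h1 : |f y - f r - f' r * (y - r)| ≤ (u1 ^ 2 + u2 ^ 2) * M2 := by
    refine hT.trans ?_
    have : (y - r) ^ 2 ≤ u1 ^ 2 + u2 ^ 2 := by
      rw [hδ]
      nlinarith [mul_nonneg (mul_nonneg hu1 hu2) (mul_nonneg hr0 (sub_nonneg.2 hr1)),
        mul_nonneg (mul_nonneg (sq_nonneg u1) hr0) (by linarith : (0:ℝ) ≤ 2 - r),
        mul_nonneg (mul_nonneg (sq_nonneg u2) (sub_nonneg.2 hr1)) (by linarith : (0:ℝ) ≤ 1 + r)]
    nlinarith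
  calc |f y - f r + (r * u2 / (1 - u1 - u2)) * f' r|
      = |(f y - f r - f' r * (y - r)) + f' r * ((y - r) + r * u2 / (1 - u1 - u2))| := by
        rw [key]
    _ ≤ |f y - f r - f' r * (y - r)| + |f' r * ((y - r) + r * u2 / (1 - u1 - u2))| :=
        abs_add_le _ _
    _ ≤ (u1 ^ 2 + u2 ^ 2) * M2 + (((u1 * u2 + u2 ^ 2) / (1 - u1 - u2)) * M1 + u1 * M1) := by
        exact add_le_add h1 h2
    _ = (u1 ^ 2 + u2 ^ 2) * M2 + ((u1 * u2 + u2 ^ 2) / (1 - u1 - u2)) * M1 + u1 * M1 := by ring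
end

section
/- For every natural number n ≥ 1 and all real numbers r, u1, u2: (r + u1·(1 − r) − u2·r)^n − r^n = Σ_{k=1}^{n} C(n,k)·u1^k·(1 − u1 − u2)^{n−k}·(r^{n−k} − r^n) − (1 − (1 − u2)^n)·r^n, where C(n,k) denotes the binomial coefficient. -/
lemma aux_binom_sum (n : ℕ) (hn : 1 ≤ n) (a s x : ℝ) :
    (∑ k ∈ Finset.Icc 1 n, (n.choose k : ℝ) * a ^ k * s ^ (n - k) * x ^ (n - k)) =
      (a + s * x) ^ n - (s * x) ^ n := by
  have hexp := add_pow a (s * x) n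
  have hsplit : (∑ k ∈ Finset.range (n + 1),
      a ^ k * (s * x) ^ (n - k) * (n.choose k : ℝ)) =
      a ^ 0 * (s * x) ^ (n - 0) * (n.choose 0 : ℝ) +
      ∑ k ∈ Finset.Icc 1 n, a ^ k * (s * x) ^ (n - k) * (n.choose k : ℝ) := by
    rw [Finset.range_eq_Ico, Finset.sum_eq_sum_Ico_succ_bot (by omega)]
    rw [Finset.Ico_add_one_right_eq_Icc]
  rw [hsplit] at hexp
  simp only [pow_zero, Nat.sub_zero, Nat.choose_zero_right, Nat.cast_one, one_mul, mul_one]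
    at hexp
  have : (∑ k ∈ Finset.Icc 1 n, a ^ k * (s * x) ^ (n - k) * (n.choose k : ℝ)) =
      ∑ k ∈ Finset.Icc 1 n, (n.choose k : ℝ) * a ^ k * s ^ (n - k) * x ^ (n - k) := by
    refine Finset.sum_congr rfl fun k _ => ?_
    rw [mul_pow]; ring
  rw [this] at hexp
  linarith

/-- Polynomial identity underlying the moment dual (Section 4): effect of a jump of the
culled frequency process on the monomial `r^n`. -/
theorem jump_monomial_identity (n : ℕ) (hn : 1 ≤ n) (r u1 u2 : ℝ) :
    (r + u1 * (1 - r) - u2 * r) ^ n - r ^ n =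
      (∑ k ∈ Finset.Icc 1 n, (n.choose k : ℝ) * u1 ^ k * (1 - u1 - u2) ^ (n - k) *
        (r ^ (n - k) - r ^ n)) - (1 - (1 - u2) ^ n) * r ^ n := by
  have hsum : (∑ k ∈ Finset.Icc 1 n, (n.choose k : ℝ) * u1 ^ k * (1 - u1 - u2) ^ (n - k) *
      (r ^ (n - k) - r ^ n)) =
      (∑ k ∈ Finset.Icc 1 n, (n.choose k : ℝ) * u1 ^ k * (1 - u1 - u2) ^ (n - k) * r ^ (n - k))
      - (∑ k ∈ Finset.Icc 1 n, (n.choose k : ℝ) * u1 ^ k * (1 - u1 - u2) ^ (n - k) * 1 ^ (n - k))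
        * r ^ n := by
    rw [Finset.sum_mul, ← Finset.sum_sub_distrib]
    refine Finset.sum_congr rfl fun k _ => ?_
    simp only [one_pow]; ring
  rw [hsum, aux_binom_sum n hn u1 (1 - u1 - u2) r, aux_binom_sum n hn u1 (1 - u1 - u2) 1]
  have h1 : r + u1 * (1 - r) - u2 * r = u1 + (1 - u1 - u2) * r := by ring
  have h2 : u1 + (1 - u1 - u2) * 1 = 1 - u2 := by ring
  rw [h1, h2, mul_one, mul_pow]
  ring
end

section
/- For every natural number n ≥ 1, every z ∈ ℝ, and all real numbers r, u1, u2 with u1 + u2 ≠ 1: z·r·[ (r + u1·(1 − r) − u2·r)^n − r^n − ((1 − r)·u1/(1 − u1 − u2))·n·r^{n−1} ] = z·Σ_{k=1}^{n} C(n,k)·u1^k·(1 − u1 − u2)^{n−k}·(r^{n−k+1} − r^n) − z·(1 − (1 − u2)^n)·r^n − z·[ 1 − (1 − u1 − u2)^n − n·u1/(1 − u1 − u2) ]·(r^{n+1} − r^n), where C(n,k) denotes the binomial coefficient. -/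
/-- Algebraic identity from Section 4: decomposition of the compensated `μ1`-jump term of
the generator applied to `f(r) = r^n` into coalescence, mutation/killing and selection
terms. -/
theorem mu1_jump_duality_identity (n : ℕ) (hn : 1 ≤ n) (z r u1 u2 : ℝ)
    (h : u1 + u2 ≠ 1) :
    z * r * ((r + u1 * (1 - r) - u2 * r) ^ n - r ^ n -
        ((1 - r) * u1 / (1 - u1 - u2)) * (n : ℝ) * r ^ (n - 1)) =
      z * (∑ k ∈ Finset.Icc 1 n, (n.choose k : ℝ) * u1 ^ k * (1 - u1 - u2) ^ (n - k) *
          (r ^ (n + 1 - k) - r ^ n)) -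
        z * (1 - (1 - u2) ^ n) * r ^ n -
        z * (1 - (1 - u1 - u2) ^ n - (n : ℝ) * u1 / (1 - u1 - u2)) *
          (r ^ (n + 1) - r ^ n) := by
  obtain ⟨m, rfl⟩ : ∃ m, n = m + 1 := ⟨n - 1, (Nat.succ_pred_eq_of_pos hn).symm⟩
  have hw : (1 : ℝ) - u1 - u2 ≠ 0 := fun h' => h (by linarith)
  set w : ℝ := 1 - u1 - u2 with hwdef
  have hb : r + u1 * (1 - r) - u2 * r = u1 + w * r := by rw [hwdef]; ring
  have h2 : (1 : ℝ) - u2 = u1 + w := by rw [hwdef]; ring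
  have hA : r * (u1 + w * r) ^ (m + 1) =
      (∑ i ∈ Finset.range (m + 1),
        (((m + 1).choose (i + 1) : ℝ) * u1 ^ (i + 1) * w ^ (m - i)) * r ^ (m + 1 - i))
        + w ^ (m + 1) * r ^ (m + 2) := by
    rw [add_pow, Finset.sum_range_succ', mul_add, Finset.mul_sum]
    congr 1
    · refine Finset.sum_congr rfl fun i hi => ?_
      have hi' : i ≤ m := Nat.lt_succ_iff.mp (Finset.mem_range.mp hi)
      rw [show m + 1 - (i + 1) = m - i from by omega,
        show m + 1 - i = (m - i) + 1 from by omega, mul_pow, pow_succ]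
      ring
    · simp [mul_pow]
      ring
  have hT : (u1 + w) ^ (m + 1) =
      (∑ i ∈ Finset.range (m + 1),
        (((m + 1).choose (i + 1) : ℝ) * u1 ^ (i + 1) * w ^ (m - i))) + w ^ (m + 1) := by
    rw [add_pow, Finset.sum_range_succ']
    congr 1
    · refine Finset.sum_congr rfl fun i hi => ?_
      rw [show m + 1 - (i + 1) = m - i from by omega]
      ring
    · simp
  have hIcc : ∑ k ∈ Finset.Icc 1 (m + 1),
        ((m + 1).choose k : ℝ) * u1 ^ k * w ^ (m + 1 - k) * (r ^ (m + 1 + 1 - k) - r ^ (m + 1))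
      = (∑ i ∈ Finset.range (m + 1),
          (((m + 1).choose (i + 1) : ℝ) * u1 ^ (i + 1) * w ^ (m - i)) * r ^ (m + 1 - i))
        - (∑ i ∈ Finset.range (m + 1),
          (((m + 1).choose (i + 1) : ℝ) * u1 ^ (i + 1) * w ^ (m - i))) * r ^ (m + 1) := by
    rw [Finset.sum_mul, ← Finset.sum_sub_distrib, ← Finset.Ico_add_one_right_eq_Icc,
      Finset.sum_Ico_eq_sum_range]
    refine Finset.sum_congr (by norm_num) fun i hi => ?_
    have hi' : i ≤ m := by
      simp only [Finset.mem_range] at hi; omega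
    rw [show m + 1 - (1 + i) = m - i from by omega,
      show m + 1 + 1 - (1 + i) = m + 1 - i from by omega,
      show 1 + i = i + 1 from by omega]
    ring
  rw [hb, h2, hIcc,
    show z * r * ((u1 + w * r) ^ (m + 1) - r ^ (m + 1) -
        (1 - r) * u1 / w * ((m + 1 : ℕ) : ℝ) * r ^ (m + 1 - 1)) =
      z * (r * (u1 + w * r) ^ (m + 1)) - z * r ^ (m + 2) -
        z * ((1 - r) * u1 / w * ((m + 1 : ℕ) : ℝ) * r ^ (m + 1)) from by
      simp only [Nat.add_sub_cancel]; ring,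
    hA, hT]
  field_simp
  ring
end

section
/- For every natural number n ≥ 1, every z ∈ ℝ, and all real numbers r, u1, u2 with u1 + u2 ≠ 1: z·(1 − r)·[ (r + u1·(1 − r) − u2·r)^n − r^n + (r·u2/(1 − u1 − u2))·n·r^{n−1} ] = z·Σ_{k=2}^{n+1} C(n,k−1)·u1^{k−1}·(1 − u1 − u2)^{n−k+1}·(r^{n−k+1} − r^n) − z·Σ_{k=2}^{n} C(n,k)·u1^{k}·(1 − u1 − u2)^{n−k}·(r^{n−k+1} − r^n) + z·[ 1 − (1 − u1 − u2)^n − n·u2/(1 − u1 − u2) ]·(r^{n+1} − r^n), where C(n,k) denotes the binomial coefficient and an empty sum equals 0. -/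
/-- Algebraic identity from Section 4: decomposition of the compensated `μ2`-jump term of
the generator applied to `f(r) = r^n` into coalescence and selection terms. -/
theorem mu2_jump_duality_identity (n : ℕ) (hn : 1 ≤ n) (z r u1 u2 : ℝ)
    (h : u1 + u2 ≠ 1) :
    z * (1 - r) * ((r + u1 * (1 - r) - u2 * r) ^ n - r ^ n +
        (r * u2 / (1 - u1 - u2)) * (n : ℝ) * r ^ (n - 1)) =
      z * (∑ k ∈ Finset.Icc 2 (n + 1), (n.choose (k - 1) : ℝ) * u1 ^ (k - 1) *
          (1 - u1 - u2) ^ (n + 1 - k) * (r ^ (n + 1 - k) - r ^ n)) -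
        z * (∑ k ∈ Finset.Icc 2 n, (n.choose k : ℝ) * u1 ^ k *
          (1 - u1 - u2) ^ (n - k) * (r ^ (n + 1 - k) - r ^ n)) +
        z * (1 - (1 - u1 - u2) ^ n - (n : ℝ) * u2 / (1 - u1 - u2)) *
          (r ^ (n + 1) - r ^ n) := by
  obtain ⟨m, rfl⟩ : ∃ m, n = m + 1 := ⟨n - 1, (Nat.succ_pred_eq_of_pos hn).symm⟩
  have hv : (1 : ℝ) - u1 - u2 ≠ 0 := by
    intro hz; exact h (by linarith)
  set v : ℝ := 1 - u1 - u2 with hvdef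
  set c : ℕ → ℝ := fun k => ((m + 1).choose k : ℝ) * u1 ^ k * v ^ (m + 1 - k) with hc
  -- binomial expansion of the jump term
  have hbin : (r + u1 * (1 - r) - u2 * r) ^ (m + 1)
      = c 0 * r ^ (m + 1) + ∑ i ∈ Finset.range (m + 1), c (i + 1) * r ^ (m - i) := by
    have h1 : r + u1 * (1 - r) - u2 * r = u1 + v * r := by rw [hvdef]; ring
    rw [h1, add_pow, Finset.sum_range_succ' (fun k => u1 ^ k * (v * r) ^ ((m + 1) - k)
      * ((m + 1).choose k : ℝ)) (m + 1)]
    rw [add_comm]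
    congr 1
    · simp [hc, mul_pow]
    · apply Finset.sum_congr rfl
      intro i hi
      have him : i ≤ m := by simpa [Nat.lt_succ_iff] using hi
      have he : m + 1 - (i + 1) = m - i := by omega
      simp only [hc]
      rw [he, mul_pow]
      ring
  -- first sum reindexed
  have S1 : (∑ k ∈ Finset.Icc 2 (m + 1 + 1), ((m + 1).choose (k - 1) : ℝ) * u1 ^ (k - 1) *
        v ^ (m + 1 + 1 - k) * (r ^ (m + 1 + 1 - k) - r ^ (m + 1)))
      = ∑ i ∈ Finset.range (m + 1), c (i + 1) * (r ^ (m - i) - r ^ (m + 1)) := by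
    rw [show Finset.Icc 2 (m + 1 + 1) = Finset.Ico 2 (m + 1 + 1 + 1) from rfl,
      Finset.sum_Ico_eq_sum_range]
    have hcard : m + 1 + 1 + 1 - 2 = m + 1 := by omega
    rw [hcard]
    apply Finset.sum_congr rfl
    intro i hi
    have him : i ≤ m := by simpa [Nat.lt_succ_iff] using hi
    have e1 : 2 + i - 1 = i + 1 := by omega
    have e2 : m + 1 + 1 - (2 + i) = m - i := by omega
    have e3 : m + 1 - (i + 1) = m - i := by omega
    simp only [hc]
    rw [e1, e2, e3]
  -- second sum reindexed and extended
  have S2 : (∑ k ∈ Finset.Icc 2 (m + 1), ((m + 1).choose k : ℝ) * u1 ^ k *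
        v ^ (m + 1 - k) * (r ^ (m + 1 + 1 - k) - r ^ (m + 1)))
      = ∑ i ∈ Finset.range (m + 1), c (i + 1) * (r ^ (m + 1 - i) - r ^ (m + 1)) := by
    rw [Finset.sum_range_succ' (fun i => c (i + 1) * (r ^ (m + 1 - i) - r ^ (m + 1))) m]
    have h0 : c (0 + 1) * (r ^ (m + 1 - 0) - r ^ (m + 1)) = 0 := by simp
    rw [h0, add_zero]
    rw [show Finset.Icc 2 (m + 1) = Finset.Ico 2 (m + 1 + 1) from rfl,
      Finset.sum_Ico_eq_sum_range]
    have hcard : m + 1 + 1 - 2 = m := by omega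
    rw [hcard]
    apply Finset.sum_congr rfl
    intro i hi
    have him : i < m := by simpa using hi
    have e1 : m + 1 + 1 - (2 + i) = m - i := by omega
    have e2 : m + 1 - (i + 1) = m - i := by omega
    simp only [hc]
    rw [e1, e2]
    ring
  rw [S1, S2, hbin]
  -- telescoping of the two sums
  have hT : (∑ i ∈ Finset.range (m + 1), c (i + 1) * (r ^ (m - i) - r ^ (m + 1)))
      - (∑ i ∈ Finset.range (m + 1), c (i + 1) * (r ^ (m + 1 - i) - r ^ (m + 1)))
      = (∑ i ∈ Finset.range (m + 1), c (i + 1) * r ^ (m - i))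
        - r * (∑ i ∈ Finset.range (m + 1), c (i + 1) * r ^ (m - i)) := by
    rw [Finset.mul_sum, ← Finset.sum_sub_distrib, ← Finset.sum_sub_distrib]
    apply Finset.sum_congr rfl
    intro i hi
    have him : i ≤ m := by simpa [Nat.lt_succ_iff] using hi
    have e1 : m + 1 - i = (m - i) + 1 := by omega
    rw [e1, pow_succ]
    ring
  have hc0 : c 0 = v ^ (m + 1) := by simp [hc]
  have hm1 : (m + 1 : ℕ) - 1 = m := rfl
  rw [hc0, hm1]
  linear_combination (-z) * hT
end

section
/- Let m ≥ 0 be a natural number, let a_0, a_1, …, a_m be real numbers, set b(x) = Σ_{l=0}^{m} a_l·x^l, and let z ≠ 0 be real. Then for every natural number n ≥ 1 and every r ∈ ℝ: −(r/z)·b(z·(1 − r))·n·r^{n−1} = n·Σ_{k=1}^{m} (−1)^{k+1}·( Σ_{l=k}^{m} C(l,k)·a_l·z^{l−1} )·(r^{n+k} − r^n) − n·(a_0/z)·r^n, where C(l,k) denotes the binomial coefficient and an empty sum equals 0. -/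
lemma binom_expand (q : ℕ) (s : ℝ) :
    (1 - s) ^ q = ∑ k ∈ Finset.range (q + 1), (-1 : ℝ) ^ k * (q.choose k : ℝ) * s ^ k := by
  rw [show (1 - s) = (-s) + 1 by ring, add_pow]
  refine Finset.sum_congr rfl fun k _ => ?_
  rw [neg_pow]; ring

lemma alt_sum (q : ℕ) (hq : 1 ≤ q) :
    ∑ k ∈ Finset.range (q + 1), (-1 : ℝ) ^ k * (q.choose k : ℝ) = 0 := by
  have h := binom_expand q 1
  simp only [sub_self, one_pow, mul_one] at h
  rw [← h, zero_pow (by omega)]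

lemma key_s15 (n q : ℕ) (hq : 1 ≤ q) (r : ℝ) :
    -(r ^ n * (1 - r) ^ q) =
      ∑ k ∈ Finset.Icc 1 q, (-1 : ℝ) ^ (k + 1) * (q.choose k : ℝ) * (r ^ (n + k) - r ^ n) := by
  have h3 : ∑ k ∈ Finset.Icc 1 q, (-1 : ℝ) ^ (k + 1) * (q.choose k : ℝ) * (r ^ (n + k) - r ^ n)
      = ∑ k ∈ Finset.range (q + 1), (-1 : ℝ) ^ (k + 1) * (q.choose k : ℝ) * (r ^ (n + k) - r ^ n) := by
    rw [Finset.range_eq_Ico, Finset.sum_eq_sum_Ico_succ_bot (by omega)]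
    simp [← Finset.Ico_add_one_right_eq_Icc]
  have h4 : ∑ k ∈ Finset.range (q + 1), (-1 : ℝ) ^ (k + 1) * (q.choose k : ℝ) * (r ^ (n + k) - r ^ n)
      = -(r ^ n * ∑ k ∈ Finset.range (q + 1), (-1 : ℝ) ^ k * (q.choose k : ℝ) * r ^ k)
        + r ^ n * ∑ k ∈ Finset.range (q + 1), (-1 : ℝ) ^ k * (q.choose k : ℝ) := by
    rw [Finset.mul_sum, Finset.mul_sum, ← Finset.sum_neg_distrib, ← Finset.sum_add_distrib]
    refine Finset.sum_congr rfl fun k _ => ?_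
    rw [pow_add, pow_succ]; ring
  rw [h3, h4, ← binom_expand, alt_sum q hq]; ring

lemma core (m : ℕ) (a : ℕ → ℝ) (z : ℝ) (p : ℕ) (r : ℝ) :
    -r * (∑ l ∈ Finset.range (m + 1), a l * (z * (1 - r)) ^ l) * r ^ p =
      z * (∑ k ∈ Finset.Icc 1 m, (-1 : ℝ) ^ (k + 1) *
          (∑ l ∈ Finset.Icc k m, (l.choose k : ℝ) * a l * z ^ (l - 1)) *
          (r ^ (p + 1 + k) - r ^ (p + 1))) - a 0 * r ^ (p + 1) := by
  induction m with
  | zero => simp; ring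
  | succ m ih =>
    rw [Finset.sum_range_succ, Finset.sum_Icc_succ_top (by omega)]
    have hsplit : ∑ k ∈ Finset.Icc 1 m, (-1 : ℝ) ^ (k + 1) *
          (∑ l ∈ Finset.Icc k (m + 1), (l.choose k : ℝ) * a l * z ^ (l - 1)) *
          (r ^ (p + 1 + k) - r ^ (p + 1))
        = (∑ k ∈ Finset.Icc 1 m, (-1 : ℝ) ^ (k + 1) *
            (∑ l ∈ Finset.Icc k m, (l.choose k : ℝ) * a l * z ^ (l - 1)) *
            (r ^ (p + 1 + k) - r ^ (p + 1)))
          + a (m + 1) * z ^ m *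
            ∑ k ∈ Finset.Icc 1 m, (-1 : ℝ) ^ (k + 1) * ((m + 1).choose k : ℝ) *
              (r ^ (p + 1 + k) - r ^ (p + 1)) := by
      rw [Finset.mul_sum, ← Finset.sum_add_distrib]
      refine Finset.sum_congr rfl fun k hk => ?_
      rw [Finset.sum_Icc_succ_top (by have := (Finset.mem_Icc.mp hk).2; omega)]
      simp only [Nat.add_sub_cancel]
      ring
    rw [hsplit, mul_pow]
    have hkey := key_s15 (p + 1) (m + 1) (by omega) r
    rw [Finset.sum_Icc_succ_top (by omega)] at hkey
    simp only [Finset.Icc_self, Finset.sum_singleton, Nat.choose_self, Nat.cast_one,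
      Nat.add_sub_cancel] at *
    linear_combination ih + z * a (m + 1) * z ^ m * hkey

/-- Polynomial identity from Section 4 (under assumption (AP)): the Malthusian drift term
`−(r/z)·b(z(1−r))·n·r^{n−1}` of the generator applied to `f(r) = r^n` decomposes into
frequency-dependent selection terms and a killing term. -/
theorem malthusian_duality_identity (m : ℕ) (a : ℕ → ℝ) (z : ℝ) (hz : z ≠ 0)
    (b : ℝ → ℝ) (hb : ∀ x, b x = ∑ l ∈ Finset.range (m + 1), a l * x ^ l)
    (n : ℕ) (hn : 1 ≤ n) (r : ℝ) :
    -(r / z) * b (z * (1 - r)) * (n : ℝ) * r ^ (n - 1) =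
      (n : ℝ) * (∑ k ∈ Finset.Icc 1 m, (-1 : ℝ) ^ (k + 1) *
          (∑ l ∈ Finset.Icc k m, (l.choose k : ℝ) * a l * z ^ (l - 1)) *
          (r ^ (n + k) - r ^ n)) -
        (n : ℝ) * (a 0 / z) * r ^ n := by
  obtain ⟨p, rfl⟩ : ∃ p, n = p + 1 := ⟨n - 1, by omega⟩
  rw [hb]
  simp only [Nat.add_sub_cancel]
  push_cast
  linear_combination (((p : ℝ) + 1) / z) * core m a z p r +
    (((p : ℝ) + 1) * ∑ k ∈ Finset.Icc 1 m, (-1 : ℝ) ^ (k + 1) *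
        (∑ l ∈ Finset.Icc k m, (l.choose k : ℝ) * a l * z ^ (l - 1)) *
        (r ^ (p + 1 + k) - r ^ (p + 1))) * mul_inv_cancel₀ hz
end
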